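/- arXiv:math/0404142 — 2 statements merged into one kernel-verified Lean document; each statement's English description precedes it below -/
import Mathlib

section
/- Let Q be a symmetric d×d matrix and G a group of d×d permutation matrices such that PᵀQP = Q for all P ∈ G. Then min{Tr(QX) : X ∈ C*, Tr(eeᵀX) = 1} = min{Tr(QY) : Y ∈ C* ∩ A, Tr(eeᵀY) = 1}, where C* is the cone of completely positive matrices, e is the all-ones vector, and A = {(1/|G|)Σ_{P∈G} PᵀXP : X symmetric} is the fixed-point subspace. -/
open Matrix

/-- A symmetric matrix is completely positive if it is a finite sum of matrices
`y yᵀ` with `y ≥ 0` componentwise. -/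
def CompletelyPositive {d : ℕ} (X : Matrix (Fin d) (Fin d) ℝ) : Prop :=
  ∃ (k : ℕ) (y : Fin k → Fin d → ℝ),
    (∀ i j, 0 ≤ y i j) ∧ X = ∑ i, Matrix.vecMulVec (y i) (y i)

/-- The all-ones matrix `eeᵀ`. -/
def J (d : ℕ) : Matrix (Fin d) (Fin d) ℝ := Matrix.of fun _ _ => 1

/-!
Averaging a feasible `X` over the group, `X ↦ |G|⁻¹ Σ_g PᵍᵀXPᵍ`, keeps it completely positive
(the cone is convex and permutation invariant), and leaves `Tr(QX)` and `Tr(JX)` unchanged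
because `Q` and `J` are themselves invariant. So every value of the full program is attained
on the fixed-point subspace, and the two feasible value sets coincide.
-/

lemma Matrix.trace_submatrix_perm {n R : Type*} [Fintype n] [AddCommMonoid R]
    (M : Matrix n n R) (e : Equiv.Perm n) : (M.submatrix e e).trace = M.trace :=
  Equiv.sum_comp e fun i => M i i

namespace CompletelyPositive

variable {d : ℕ}

lemma zero : CompletelyPositive (0 : Matrix (Fin d) (Fin d) ℝ) :=
  ⟨0, finZeroElim, finZeroElim, by simp⟩

lemma add {X Y : Matrix (Fin d) (Fin d) ℝ} (hX : CompletelyPositive X)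
    (hY : CompletelyPositive Y) : CompletelyPositive (X + Y) := by
  obtain ⟨k, y, hy, rfl⟩ := hX
  obtain ⟨l, z, hz, rfl⟩ := hY
  refine ⟨k + l, Fin.append y z, fun i j => ?_, ?_⟩
  · cases i using Fin.addCases <;> simp only [Fin.append_left, Fin.append_right, hy, hz]
  · simp only [Fin.sum_univ_add, Fin.append_left, Fin.append_right]

lemma sum {ι : Type*} (s : Finset ι) {X : ι → Matrix (Fin d) (Fin d) ℝ}
    (hX : ∀ i ∈ s, CompletelyPositive (X i)) : CompletelyPositive (∑ i ∈ s, X i) :=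
  Finset.sum_induction X _ (fun _ _ => add) zero hX

lemma smul {c : ℝ} (hc : 0 ≤ c) {X : Matrix (Fin d) (Fin d) ℝ} (hX : CompletelyPositive X) :
    CompletelyPositive (c • X) := by
  obtain ⟨k, y, hy, rfl⟩ := hX
  refine ⟨k, fun i => √c • y i, fun i j => mul_nonneg (Real.sqrt_nonneg c) (hy i j), ?_⟩
  simp only [smul_vecMulVec, vecMulVec_smul, smul_smul, Real.mul_self_sqrt hc, Finset.smul_sum]

lemma submatrix {X : Matrix (Fin d) (Fin d) ℝ} (hX : CompletelyPositive X)
    (e : Equiv.Perm (Fin d)) : CompletelyPositive (X.submatrix e e) := by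
  obtain ⟨k, y, hy, rfl⟩ := hX
  refine ⟨k, fun i => y i ∘ e, fun i j => hy i (e j), ?_⟩
  ext a b
  simp [Matrix.sum_apply, vecMulVec_apply]

lemma isSymm {X : Matrix (Fin d) (Fin d) ℝ} (hX : CompletelyPositive X) : X.IsSymm := by
  obtain ⟨k, y, -, rfl⟩ := hX
  simp [Matrix.IsSymm, transpose_sum]

end CompletelyPositive

section GroupAverage

variable {G n R : Type*} [Group G] [Fintype G] [Fintype n]

/-- The Reynolds operator of the action; its image of the symmetric matrices is the fixed-point
subspace `A`. -/
def groupAverage [Field R] (φ : G →* Equiv.Perm n) (X : Matrix n n R) : Matrix n n R :=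
  ((Fintype.card G : R))⁻¹ • ∑ g : G, X.submatrix (φ g) (φ g)

lemma trace_mul_groupAverage [Field R] [CharZero R] (φ : G →* Equiv.Perm n)
    {A : Matrix n n R} (hA : ∀ g : G, A.submatrix (φ g) (φ g) = A) (X : Matrix n n R) :
    (A * groupAverage φ X).trace = (A * X).trace := by
  have hterm (g : G) : (A * X.submatrix (φ g) (φ g)).trace = (A * X).trace := by
    conv_lhs => rw [← hA g]
    rw [submatrix_mul_equiv, trace_submatrix_perm]
  simp only [groupAverage, Matrix.mul_smul, trace_smul, Matrix.mul_sum, trace_sum, hterm,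
    Finset.sum_const, Finset.card_univ, nsmul_eq_mul, smul_eq_mul]
  field_simp

lemma CompletelyPositive.groupAverage {d : ℕ} (φ : G →* Equiv.Perm (Fin d))
    {X : Matrix (Fin d) (Fin d) ℝ} (hX : CompletelyPositive X) :
    CompletelyPositive (groupAverage φ X) :=
  smul (by positivity) (sum _ fun g _ => hX.submatrix (φ g))

end GroupAverage

theorem symmetry_reduction_general {d : ℕ} {G : Type*} [Group G] [Fintype G]
    (φ : G →* Equiv.Perm (Fin d)) (Q : Matrix (Fin d) (Fin d) ℝ)
    (hQinv : ∀ g : G, Q.submatrix (φ g) (φ g) = Q) :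
    sInf {v : ℝ | ∃ X : Matrix (Fin d) (Fin d) ℝ, CompletelyPositive X ∧
        Matrix.trace (J d * X) = 1 ∧ v = Matrix.trace (Q * X)} =
    sInf {v : ℝ | ∃ X : Matrix (Fin d) (Fin d) ℝ, CompletelyPositive X ∧
        Matrix.trace (J d * X) = 1 ∧
        (∃ Y : Matrix (Fin d) (Fin d) ℝ, Y.IsSymm ∧
          X = ((Fintype.card G : ℝ))⁻¹ • ∑ g : G, Y.submatrix (φ g) (φ g)) ∧
        v = Matrix.trace (Q * X)} := by
  congr 1
  ext v
  constructor
  · rintro ⟨X, hX, hJX, rfl⟩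
    have hJ (g : G) : (J d).submatrix (φ g) (φ g) = J d := rfl
    exact ⟨groupAverage φ X, hX.groupAverage φ, by rw [trace_mul_groupAverage φ hJ, hJX],
      ⟨X, hX.isSymm, rfl⟩, (trace_mul_groupAverage φ hQinv X).symm⟩
  · rintro ⟨X, hX, hJX, -, rfl⟩
    exact ⟨X, hX, hJX, rfl⟩

/-- Symmetry reduction: if `Q` is invariant under a group `G` of permutation matrices,
the completely positive program may be restricted to the fixed-point subspace
`A = {(1/|G|) Σ_{P∈G} PᵀXP : X symmetric}`. -/
theorem symmetry_reduction {d : ℕ} {G : Type*} [Group G] [Fintype G]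
    (φ : G →* Equiv.Perm (Fin d)) (Q : Matrix (Fin d) (Fin d) ℝ)
    (hQsym : Q.IsSymm) (hQinv : ∀ g : G, Q.submatrix (φ g) (φ g) = Q) :
    sInf {v : ℝ | ∃ X : Matrix (Fin d) (Fin d) ℝ, CompletelyPositive X ∧
        Matrix.trace (J d * X) = 1 ∧ v = Matrix.trace (Q * X)} =
    sInf {v : ℝ | ∃ X : Matrix (Fin d) (Fin d) ℝ, CompletelyPositive X ∧
        Matrix.trace (J d * X) = 1 ∧
        (∃ Y : Matrix (Fin d) (Fin d) ℝ, Y.IsSymm ∧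
          X = ((Fintype.card G : ℝ))⁻¹ • ∑ g : G, Y.submatrix (φ g) (φ g)) ∧
        v = Matrix.trace (Q * X)} :=
  symmetry_reduction_general φ Q hQinv
end

section
/- Let Q be a symmetric d×d matrix. If there exist a real t, a real vector y ∈ ℝ^M, symmetric 0-1 matrices A₁,…,A_M summing to eeᵀ with Q = Σᵢ bᵢAᵢ, such that bᵢ − t − yᵢ ≥ 0 for all i and Σᵢ yᵢAᵢ is positive semidefinite, then xᵀQx ≥ t for all x in the standard simplex. -/
open Matrix

/-!
Since the `Aᵢ` partition the positions, `Q - t • eeᵀ = Σᵢ yᵢAᵢ + Σᵢ (bᵢ - t - yᵢ)Aᵢ` is the sum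
of a positive semidefinite matrix and an entrywise nonnegative one, hence copositive. On the
simplex `xᵀ(eeᵀ)x = (eᵀx)² = 1`, so `xᵀQx - t ≥ 0`.
-/

namespace Matrix

variable {n : Type*} [Fintype n]

theorem dotProduct_mulVec_nonneg_of_nonneg {R : Type*} [CommSemiring R] [PartialOrder R]
    [IsOrderedRing R] {N : Matrix n n R} {x : n → R} (hN : ∀ k l, 0 ≤ N k l) (hx : 0 ≤ x) :
    0 ≤ x ⬝ᵥ N *ᵥ x :=
  Finset.sum_nonneg fun k _ => mul_nonneg (hx k) <|
    Finset.sum_nonneg fun l _ => mul_nonneg (hN k l) (hx l)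

theorem PosSemidef.dotProduct_add_mulVec_nonneg {P N : Matrix n n ℝ} (hP : P.PosSemidef)
    (hN : ∀ k l, 0 ≤ N k l) {x : n → ℝ} (hx : 0 ≤ x) : 0 ≤ x ⬝ᵥ (P + N) *ᵥ x := by
  rw [add_mulVec, dotProduct_add]
  exact add_nonneg (by simpa using hP.dotProduct_mulVec_nonneg x)
    (dotProduct_mulVec_nonneg_of_nonneg hN hx)

end Matrix

theorem dotProduct_J_mulVec {d : ℕ} (x : Fin d → ℝ) : x ⬝ᵥ J d *ᵥ x = (∑ i, x i) ^ 2 := by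
  simp [_root_.J, dotProduct, mulVec, sq, Finset.sum_mul]

theorem certificate_lower_bound_general {d M : ℕ}
    (A : Fin M → Matrix (Fin d) (Fin d) ℝ)
    (hA01 : ∀ i k l, A i k l = 0 ∨ A i k l = 1)
    (hAsum : (∑ i, A i) = J d)
    (b : Fin M → ℝ) (Q : Matrix (Fin d) (Fin d) ℝ)
    (hQdecomp : Q = ∑ i, b i • A i)
    (t : ℝ) (y : Fin M → ℝ)
    (hby : ∀ i, 0 ≤ b i - t - y i)
    (hpsd : (∑ i, y i • A i).PosSemidef) :
    ∀ x : Fin d → ℝ, (∀ i, 0 ≤ x i) → (∑ i, x i) = 1 →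
      t ≤ x ⬝ᵥ Q.mulVec x := by
  intro x hx hx1
  have hsplit : Q - t • J d = (∑ i, y i • A i) + ∑ i, (b i - t - y i) • A i := by
    rw [hQdecomp, ← hAsum, Finset.smul_sum, ← Finset.sum_sub_distrib, ← Finset.sum_add_distrib]
    refine Finset.sum_congr rfl fun i _ => ?_
    module
  have hN : ∀ k l, 0 ≤ (∑ i, (b i - t - y i) • A i) k l := fun k l => by
    simp only [Matrix.sum_apply, Matrix.smul_apply, smul_eq_mul]
    exact Finset.sum_nonneg fun i _ =>
      mul_nonneg (hby i) (by rcases hA01 i k l with h | h <;> simp [h])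
  have hcopos := hpsd.dotProduct_add_mulVec_nonneg hN (x := x) hx
  rw [← hsplit, sub_mulVec, dotProduct_sub, smul_mulVec, dotProduct_smul,
    dotProduct_J_mulVec, hx1] at hcopos
  simpa using hcopos

/-- The SDP relaxation certificate: if `Q = Σᵢ bᵢAᵢ` for symmetric 0-1 matrices `Aᵢ`
summing to `eeᵀ`, and there are `t` and `y` with `bᵢ - t - yᵢ ≥ 0` for all `i` and
`Σᵢ yᵢAᵢ` positive semidefinite, then `xᵀQx ≥ t` on the standard simplex. -/
theorem certificate_lower_bound {d M : ℕ}
    (A : Fin M → Matrix (Fin d) (Fin d) ℝ)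
    (hAsym : ∀ i, (A i).IsSymm)
    (hA01 : ∀ i k l, A i k l = 0 ∨ A i k l = 1)
    (hAsum : (∑ i, A i) = J d)
    (b : Fin M → ℝ) (Q : Matrix (Fin d) (Fin d) ℝ) (hQ : Q.IsSymm)
    (hQdecomp : Q = ∑ i, b i • A i)
    (t : ℝ) (y : Fin M → ℝ)
    (hby : ∀ i, 0 ≤ b i - t - y i)
    (hpsd : (∑ i, y i • A i).PosSemidef) :
    ∀ x : Fin d → ℝ, (∀ i, 0 ≤ x i) → (∑ i, x i) = 1 →
      t ≤ x ⬝ᵥ Q.mulVec x :=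
  certificate_lower_bound_general A hA01 hAsum b Q hQdecomp t y hby hpsd
end
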